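/- arXiv:quant-ph/0502153 — 4 statements merged into one kernel-verified Lean document; each statement's English description precedes it below -/
import Mathlib

section
/- Let J_1 = (1/√2)·[[0,1,0],[1,0,1],[0,1,0]], J_2 = (1/√2)·[[0,−i,0],[i,0,−i],[0,i,0]], J_3 = diag(1,0,−1) be the standard spin-1 matrices, and write J_{(a}J_{b)} = ½(J_a J_b + J_b J_a). Let v ∈ ℝ³, let w be a real symmetric 3×3 matrix with Tr(w) = 1/2, and set ρ_{v,w} = ∑_a v_a J_a + ∑_{a,b} w_{ab} J_{(a}J_{b)}. For p ∈ ℝ define the spin-1 channel Ε(ρ) = (1−p) ρ + (p/2) ∑_{i=1}^3 J_i ρ J_i. Then Ε(ρ_{v,w}) = ρ_{v',w'} where v'_a = (1 − p/2) v_a and w'_{ab} = (1 − 3p/2) w_{ab} + (p/4) δ_{ab}. -/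
open Matrix BigOperators

/-- The standard spin-1 angular momentum matrices `J₁, J₂, J₃`. -/
noncomputable def spinOne : Fin 3 → Matrix (Fin 3) (Fin 3) ℂ :=
  ![((Real.sqrt 2 : ℝ) : ℂ)⁻¹ • !![0, 1, 0; 1, 0, 1; 0, 1, 0],
    ((Real.sqrt 2 : ℝ) : ℂ)⁻¹ •
      !![0, -Complex.I, 0; Complex.I, 0, -Complex.I; 0, Complex.I, 0],
    !![1, 0, 0; 0, 0, 0; 0, 0, -1]]

/-- The symmetrized product `J_{(a}J_{b)} = ½(J_a J_b + J_b J_a)`. -/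
noncomputable def spinOneSym (a b : Fin 3) : Matrix (Fin 3) (Fin 3) ℂ :=
  (1 / 2 : ℂ) • (spinOne a * spinOne b + spinOne b * spinOne a)

/-- The density matrix `ρ_{v,w} = ∑_a v_a J_a + ∑_{a,b} w_{ab} J_{(a}J_{b)}`. -/
noncomputable def spinOneRho (v : Fin 3 → ℝ) (w : Matrix (Fin 3) (Fin 3) ℝ) :
    Matrix (Fin 3) (Fin 3) ℂ :=
  ∑ a, (v a : ℂ) • spinOne a + ∑ a, ∑ b, (w a b : ℂ) • spinOneSym a b

set_option maxHeartbeats 4000000 in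
/-- The spin-1 channel `Ε(ρ) = (1−p)ρ + (p/2)∑ᵢ Jᵢ ρ Jᵢ` acts on
`ρ_{v,w}` (with `w` real symmetric of trace `1/2`) by
`v ↦ (1 − p/2) v` and `w ↦ (1 − 3p/2) w + (p/4) δ`. -/
theorem spin_one_channel_action (v : Fin 3 → ℝ) (w : Matrix (Fin 3) (Fin 3) ℝ)
    (hw : w.IsSymm) (hwtr : w.trace = 1 / 2) (p : ℝ) :
    (1 - (p : ℂ)) • spinOneRho v w +
        ((p / 2 : ℝ) : ℂ) • ∑ i, spinOne i * spinOneRho v w * spinOne i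
      = spinOneRho (fun a => (1 - p / 2) * v a)
          (Matrix.of fun a b => (1 - 3 * p / 2) * w a b +
            (p / 4) * (if a = b then 1 else 0)) := by
  have htr : (w 0 0 : ℂ) + w 1 1 + w 2 2 = 1/2 := by
    have h := hwtr
    simp [Matrix.trace, Fin.sum_univ_three] at h
    rw [← Complex.ofReal_add, ← Complex.ofReal_add, h]; norm_num
  have hs2 : (((Real.sqrt 2 : ℝ) : ℂ))^2 = 2 := by
    norm_cast; rw [Real.sq_sqrt] <;> norm_num
  have hsi2 : ((((Real.sqrt 2 : ℝ) : ℂ))⁻¹)^2 = 1/2 := by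
    rw [inv_pow, hs2]; norm_num
  have hsi3 : ((((Real.sqrt 2 : ℝ) : ℂ))⁻¹)^3 = (((Real.sqrt 2 : ℝ) : ℂ))⁻¹ * (1/2) := by
    rw [pow_succ, hsi2]; ring
  have hsi4 : ((((Real.sqrt 2 : ℝ) : ℂ))⁻¹)^4 = 1/4 := by
    rw [show (4:ℕ) = 2*2 from rfl, pow_mul, hsi2]; norm_num
  have hi3 : Complex.I^3 = -Complex.I := by
    rw [pow_succ, Complex.I_sq]; ring
  have hi4 : Complex.I^4 = 1 := by
    rw [show (4:ℕ) = 2*2 from rfl, pow_mul, Complex.I_sq]; norm_num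
  ext i j
  fin_cases i <;> fin_cases j <;>
    (simp [spinOneRho, spinOneSym, spinOne, Fin.sum_univ_three, Matrix.mul_apply]
     ring_nf
     simp only [Complex.I_sq, hsi2, hsi3, hsi4, hi3, hi4]
     first
     | ring1
     | linear_combination (p : ℂ) * htr)
end

section
/- Let J_1, J_2, J_3 be the standard spin-1 matrices and J_{(a}J_{b)} = ½(J_a J_b + J_b J_a). Let w be a real symmetric 3×3 matrix with Tr(w) = 1/2 and let ρ_w = ∑_{a,b} w_{ab} J_{(a}J_{b)} be the corresponding W-state. Let Ε(ρ) = (1−p) ρ + (p/2) ∑_{i=1}^3 J_i ρ J_i be the spin-1 channel and let Ε^n denote its n-fold iteration. Define polynomials F^{(n)}(p) by F^{(1)}(p) = p/4 and F^{(n+1)}(p) = (1 − 3p/2) F^{(n)}(p) + p/4. Then for every n ≥ 1, Ε^n(ρ_w) = ∑_{a,b} (w_n)_{ab} J_{(a}J_{b)} with (w_n)_{ab} = F^{(n)}(p)(δ_{ab} − 6 w_{ab}) + w_{ab}. -/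
open Matrix BigOperators

/-- The spin-1 channel `Ε(ρ) = (1−p)ρ + (p/2)∑ᵢ Jᵢ ρ Jᵢ`. -/
noncomputable def spinOneChannel (p : ℝ) (ρ : Matrix (Fin 3) (Fin 3) ℂ) :
    Matrix (Fin 3) (Fin 3) ℂ :=
  (1 - (p : ℂ)) • ρ + ((p / 2 : ℝ) : ℂ) • ∑ i, spinOne i * ρ * spinOne i

lemma hc2' : (((Real.sqrt 2 : ℝ) : ℂ))⁻¹ ^ 2 = 1 / 2 := by
  rw [sq, ← mul_inv, ← Complex.ofReal_mul, Real.mul_self_sqrt (by norm_num)]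
  norm_num

lemma hs2' : ((Real.sqrt 2 : ℝ) : ℂ) ^ 2 = 2 := by
  rw [← Complex.ofReal_pow, Real.sq_sqrt (by norm_num)]
  norm_num

/-- Explicit form of the spin-1 channel on an arbitrary matrix. -/
lemma channel_explicit (p : ℝ) (r : Matrix (Fin 3) (Fin 3) ℂ) :
    spinOneChannel p r = (1 - (p : ℂ)) • r + ((p / 2 : ℝ) : ℂ) •
      !![r 0 0 + r 1 1, r 1 2, -(r 0 2);
         r 2 1, r 0 0 + r 2 2, r 0 1;
         -(r 2 0), r 1 0, r 1 1 + r 2 2] := by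
  have hc2 := hc2'
  set c : ℂ := (((Real.sqrt 2 : ℝ) : ℂ))⁻¹ with hcdef
  unfold spinOneChannel
  congr 1
  congr 1
  ext i j
  simp only [spinOne, Fin.sum_univ_three, Matrix.add_apply, Matrix.smul_apply,
    Matrix.mul_apply, Matrix.cons_val', Matrix.cons_val_zero, Matrix.cons_val_one,
    Matrix.head_cons, Matrix.empty_val', Matrix.cons_val_fin_one,
    Matrix.cons_val_two, Matrix.tail_cons, Matrix.of_apply, smul_eq_mul,
    Matrix.head_fin_const]
  fin_cases i <;> fin_cases j <;>
      simp [Complex.I_sq, Matrix.vecHead, Matrix.vecTail] <;>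
      ring_nf <;>
      simp [Complex.I_sq, hc2, hc2', hs2'] <;>
      ring_nf

/-- Explicit form of a W-state. -/
lemma sumSym_eq (v : Matrix (Fin 3) (Fin 3) ℝ) :
    ∑ a, ∑ b, (v a b : ℂ) • spinOneSym a b =
      !![((v 0 0 : ℂ) + v 1 1)/2 + v 2 2,
          ((Real.sqrt 2 : ℝ) : ℂ)⁻¹/2 * (v 0 2 + v 2 0)
            - Complex.I * (((Real.sqrt 2 : ℝ) : ℂ)⁻¹/2) * (v 1 2 + v 2 1),
          ((v 0 0 : ℂ) - v 1 1)/2 - Complex.I/2 * (v 0 1 + v 1 0);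
         ((Real.sqrt 2 : ℝ) : ℂ)⁻¹/2 * (v 0 2 + v 2 0)
            + Complex.I * (((Real.sqrt 2 : ℝ) : ℂ)⁻¹/2) * (v 1 2 + v 2 1),
          (v 0 0 : ℂ) + v 1 1,
          -(((Real.sqrt 2 : ℝ) : ℂ)⁻¹/2) * (v 0 2 + v 2 0)
            + Complex.I * (((Real.sqrt 2 : ℝ) : ℂ)⁻¹/2) * (v 1 2 + v 2 1);
         ((v 0 0 : ℂ) - v 1 1)/2 + Complex.I/2 * (v 0 1 + v 1 0),
          -(((Real.sqrt 2 : ℝ) : ℂ)⁻¹/2) * (v 0 2 + v 2 0)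
            - Complex.I * (((Real.sqrt 2 : ℝ) : ℂ)⁻¹/2) * (v 1 2 + v 2 1),
          ((v 0 0 : ℂ) + v 1 1)/2 + v 2 2] := by
  have hc2 := hc2'
  set c : ℂ := (((Real.sqrt 2 : ℝ) : ℂ))⁻¹ with hcdef
  ext i j
  simp only [spinOneSym, spinOne, Fin.sum_univ_three, Matrix.sum_apply,
    Matrix.add_apply, Matrix.smul_apply, Matrix.mul_apply, Matrix.cons_val',
    Matrix.cons_val_zero, Matrix.cons_val_one, Matrix.head_cons,
    Matrix.empty_val', Matrix.cons_val_fin_one, Matrix.cons_val_two,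
    Matrix.tail_cons, Matrix.of_apply, smul_eq_mul, Matrix.head_fin_const]
  fin_cases i <;> fin_cases j <;>
      simp [Complex.I_sq, Matrix.vecHead, Matrix.vecTail] <;>
      ring_nf <;>
      simp -failIfUnchanged [Complex.I_sq, hc2, hc2', hs2', ← hcdef] <;>
      ring_nf

/-- One step of the channel on a W-state. -/
lemma key (p : ℝ) (v : Matrix (Fin 3) (Fin 3) ℝ)
    (h10 : v 1 0 = v 0 1) (h20 : v 2 0 = v 0 2) (h21 : v 2 1 = v 1 2)
    (h22 : v 2 2 = 1 / 2 - v 0 0 - v 1 1) :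
    spinOneChannel p (∑ a, ∑ b, (v a b : ℂ) • spinOneSym a b)
      = ∑ a, ∑ b, (((1 - 3 * p / 2) * v a b
          + p / 4 * (if a = b then 1 else 0) : ℝ) : ℂ) • spinOneSym a b := by
  have h := sumSym_eq (Matrix.of fun a b =>
    (1 - 3 * p / 2) * v a b + p / 4 * (if a = b then 1 else 0))
  simp only [Matrix.of_apply] at h
  rw [sumSym_eq v, channel_explicit, h]
  set c : ℂ := (((Real.sqrt 2 : ℝ) : ℂ))⁻¹ with hcdef
  ext i j
  fin_cases i <;> fin_cases j <;>
      simp [h10, h20, h21, h22, Matrix.vecHead, Matrix.vecTail] <;>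
      push_cast [h10, h20, h21, h22] <;>
      ring_nf

/-- **Iteration formula.** For a W-state
`ρ_w = ∑_{a,b} w_{ab} J_{(a}J_{b)}` with `w` real symmetric, `Tr w = 1/2`, and
polynomials `F⁽¹⁾(p) = p/4`, `F⁽ⁿ⁺¹⁾(p) = (1 − 3p/2) F⁽ⁿ⁾(p) + p/4`,
the `n`-fold iterated spin-1 channel sends `w` to
`F⁽ⁿ⁾(p)(δ − 6w) + w`. -/
theorem spin_one_channel_iteration (w : Matrix (Fin 3) (Fin 3) ℝ)
    (hw : w.IsSymm) (hwtr : w.trace = 1 / 2) (p : ℝ)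
    (F : ℕ → ℝ) (hF1 : F 1 = p / 4)
    (hFrec : ∀ n : ℕ, 1 ≤ n → F (n + 1) = (1 - 3 * p / 2) * F n + p / 4) :
    ∀ n : ℕ, 1 ≤ n →
      (spinOneChannel p)^[n] (∑ a, ∑ b, (w a b : ℂ) • spinOneSym a b)
        = ∑ a, ∑ b,
            ((F n * ((if a = b then 1 else 0) - 6 * w a b) + w a b : ℝ) : ℂ) •
              spinOneSym a b := by
  have h10 : w 1 0 = w 0 1 := by rw [← hw.apply]
  have h20 : w 2 0 = w 0 2 := by rw [← hw.apply]
  have h21 : w 2 1 = w 1 2 := by rw [← hw.apply]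
  have h22 : w 2 2 = 1 / 2 - w 0 0 - w 1 1 := by
    have : w 0 0 + w 1 1 + w 2 2 = 1 / 2 := by
      simpa [Matrix.trace, Fin.sum_univ_three] using hwtr
    linarith
  intro n hn
  induction n, hn using Nat.le_induction with
  | base =>
    rw [Function.iterate_one, key p w h10 h20 h21 h22]
    refine Finset.sum_congr rfl fun a _ => Finset.sum_congr rfl fun b _ => ?_
    congr 2
    rw [hF1]; by_cases hab : a = b <;> simp [hab] <;> ring
  | succ n hn ih =>
    rw [Function.iterate_succ_apply', ih]
    have hrw : ∀ a b : Fin 3,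
        ((F n * ((if a = b then 1 else 0) - 6 * w a b) + w a b : ℝ) : ℂ)
          = (((Matrix.of fun a b =>
              F n * ((if a = b then 1 else 0) - 6 * w a b) + w a b) a b : ℝ) : ℂ) := by
      intro a b; simp
    simp only [hrw]
    rw [key p (Matrix.of fun a b =>
        F n * ((if a = b then 1 else 0) - 6 * w a b) + w a b)
      (by simp [Fin.ext_iff, h10] <;> ring)
      (by simp [Fin.ext_iff, h20] <;> ring)
      (by simp [Fin.ext_iff, h21] <;> ring)
      (by simp [Fin.ext_iff, h22] <;> ring)]
    refine Finset.sum_congr rfl fun a _ => Finset.sum_congr rfl fun b _ => ?_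
    congr 2
    rw [hFrec n hn]
    by_cases hab : a = b <;> simp [hab] <;> ring
end

section
/- Let s be a half-integer with 2s a positive integer, d = 2s+1, λ = s(s+1), and let J_1, J_2, J_3 be Hermitian d×d complex matrices satisfying [J_a, J_b] = i ∑_c ε_{abc} J_c and J_1² + J_2² + J_3² = λ·I. Write J_{(a}J_{b)} = ½(J_a J_b + J_b J_a). Let v ∈ ℝ³ and let w be a real symmetric 3×3 matrix, and set ρ_{v,w} = ∑_a v_a J_a + ∑_{a,b} w_{ab} J_{(a}J_{b)}. Then: (1) Tr(ρ_{v,w}) = 1 if and only if Tr(w) = 3/(dλ); and (2) for any p ∈ ℝ, the spin-s channel Ε_s(ρ) = (1−p) ρ + (p/λ) ∑_{i=1}^3 J_i ρ J_i satisfies Ε_s(ρ_{v,w}) = (1 − p/λ) ∑_a v_a J_a + (1 − 3p/λ) ∑_{a,b} w_{ab} J_{(a}J_{b)} + p·Tr(w)·I. -/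
open Matrix BigOperators

/-- The Levi-Civita symbol on three indices in `{0,1,2}`. -/
def leviCivita (a b c : Fin 3) : ℤ :=
  ((b.val : ℤ) - a.val) * ((c.val : ℤ) - b.val) * ((c.val : ℤ) - a.val) / 2

section SpinAux
variable {R : Type*} [Ring R] [Algebra ℂ R]

lemma spin_lin (X Y Z : R) (c : ℂ)
    (h01 : X*Y - Y*X = Complex.I • Z)
    (h12 : Y*Z - Z*Y = Complex.I • X)
    (h20 : Z*X - X*Z = Complex.I • Y)
    (hcas : X*X + Y*Y + Z*Z = c • 1) :
    X*X*X + Y*X*Y + Z*X*Z = (c - 1) • X := by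
  have e1 : Y*X - X*Y = -(Complex.I • Z) := by rw [← h01]; abel
  calc X*X*X + Y*X*Y + Z*X*Z
      = X*(X*X + Y*Y + Z*Z) + (Y*X - X*Y)*Y + (Z*X - X*Z)*Z := by noncomm_ring <;> module
    _ = X*(c • (1:R)) + (-(Complex.I • Z))*Y + (Complex.I • Y)*Z := by rw [hcas, e1, h20]
    _ = c • X + Complex.I • (Y*Z - Z*Y) := by noncomm_ring <;> module
    _ = c • X + Complex.I • (Complex.I • X) := by rw [h12]
    _ = (c - 1) • X := by
        rw [smul_smul, Complex.I_mul_I, sub_smul, one_smul, neg_one_smul, sub_eq_add_neg]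

lemma spin_quad_aa (X Y Z : R) (c : ℂ)
    (h01 : X*Y - Y*X = Complex.I • Z)
    (h12 : Y*Z - Z*Y = Complex.I • X)
    (h20 : Z*X - X*Z = Complex.I • Y)
    (hcas : X*X + Y*Y + Z*Z = c • 1) :
    X*(X*X)*X + Y*(X*X)*Y + Z*(X*X)*Z = (c - 3) • (X*X) + c • 1 := by
  have e1 : Y*X - X*Y = -(Complex.I • Z) := by rw [← h01]; abel
  have hlin := spin_lin X Y Z c h01 h12 h20 hcas
  have key : Y*(X*Z) - Z*(X*Y) = Complex.I • (X*X - Y*Y - Z*Z) := by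
    calc Y*(X*Z) - Z*(X*Y)
        = (Y*X - X*Y)*Z - (Z*X - X*Z)*Y + X*(Y*Z - Z*Y) := by noncomm_ring <;> module
      _ = (-(Complex.I • Z))*Z - (Complex.I • Y)*Y + X*(Complex.I • X) := by
          rw [e1, h20, h12]
      _ = Complex.I • (X*X - Y*Y - Z*Z) := by noncomm_ring <;> module
  have hYY : Y*Y + Z*Z = c • (1:R) - X*X := by rw [← hcas]; abel
  calc X*(X*X)*X + Y*(X*X)*Y + Z*(X*X)*Z
      = X*(X*X*X + Y*X*Y + Z*X*Z) + (Y*X - X*Y)*(X*Y) + (Z*X - X*Z)*(X*Z) := by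
        noncomm_ring <;> module
    _ = X*((c-1) • X) + (-(Complex.I • Z))*(X*Y) + (Complex.I • Y)*(X*Z) := by
        rw [hlin, e1, h20]
    _ = (c-1) • (X*X) + Complex.I • (Y*(X*Z) - Z*(X*Y)) := by noncomm_ring <;> module
    _ = (c-1) • (X*X) + Complex.I • (Complex.I • (X*X - Y*Y - Z*Z)) := by rw [key]
    _ = (c-1) • (X*X) - (X*X - Y*Y - Z*Z) := by
        rw [smul_smul, Complex.I_mul_I, neg_one_smul]; abel
    _ = (c-1) • (X*X) - (X*X) + (Y*Y + Z*Z) := by abel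
    _ = (c-1) • (X*X) - (X*X) + (c • (1:R) - X*X) := by rw [hYY]
    _ = (c - 3) • (X*X) + c • 1 := by
        rw [sub_smul, sub_smul, one_smul]
        push_cast
        rw [show ((3:ℂ)) • (X*X) = (X*X) + (X*X) + (X*X) by
          rw [show (3:ℂ) = 1+1+1 by norm_num, add_smul, add_smul, one_smul]]
        abel

lemma spin_quad_ab (X Y Z : R) (c : ℂ)
    (h01 : X*Y - Y*X = Complex.I • Z)
    (h12 : Y*Z - Z*Y = Complex.I • X)
    (h20 : Z*X - X*Z = Complex.I • Y)
    (hcas : X*X + Y*Y + Z*Z = c • 1) :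
    X*(X*Y)*X + Y*(X*Y)*Y + Z*(X*Y)*Z = (c - 2) • (X*Y) - Y*X := by
  have e1 : Y*X - X*Y = -(Complex.I • Z) := by rw [← h01]; abel
  have e2 : Z*Y - Y*Z = -(Complex.I • X) := by rw [← h12]; abel
  have hlinY := spin_lin Y Z X c h12 h20 h01 (by rw [← hcas]; abel)
  -- hlinY : Y*Y*Y + Z*Y*Z + X*Y*X = (c-1) • Y
  have key : Y*(Y*Z) - Z*(Y*Y) = Complex.I • (Y*X + X*Y) := by
    calc Y*(Y*Z) - Z*(Y*Y)
        = Y*(Y*Z - Z*Y) + (Y*Z - Z*Y)*Y := by noncomm_ring <;> module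
      _ = Y*(Complex.I • X) + (Complex.I • X)*Y := by rw [h12]
      _ = Complex.I • (Y*X + X*Y) := by noncomm_ring <;> module
  calc X*(X*Y)*X + Y*(X*Y)*Y + Z*(X*Y)*Z
      = X*(Y*Y*Y + Z*Y*Z + X*Y*X) + (Y*X - X*Y)*(Y*Y) + (Z*X - X*Z)*(Y*Z) := by
        noncomm_ring <;> module
    _ = X*((c-1) • Y) + (-(Complex.I • Z))*(Y*Y) + (Complex.I • Y)*(Y*Z) := by
        rw [hlinY, e1, h20]
    _ = (c-1) • (X*Y) + Complex.I • (Y*(Y*Z) - Z*(Y*Y)) := by noncomm_ring <;> module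
    _ = (c-1) • (X*Y) + Complex.I • (Complex.I • (Y*X + X*Y)) := by rw [key]
    _ = (c-1) • (X*Y) - (Y*X + X*Y) := by
        rw [smul_smul, Complex.I_mul_I, neg_one_smul]; abel
    _ = (c - 2) • (X*Y) - Y*X := by
        rw [sub_smul, sub_smul, one_smul,
          show ((2:ℂ)) • (X*Y) = (X*Y) + (X*Y) by
            rw [show (2:ℂ) = 1+1 by norm_num, add_smul, one_smul]]
        abel


lemma spin_quad_ba (X Y Z : R) (c : ℂ)
    (h01 : X*Y - Y*X = Complex.I • Z)
    (h12 : Y*Z - Z*Y = Complex.I • X)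
    (h20 : Z*X - X*Z = Complex.I • Y)
    (hcas : X*X + Y*Y + Z*Z = c • 1) :
    X*(Y*X)*X + Y*(Y*X)*Y + Z*(Y*X)*Z = (c - 2) • (Y*X) - X*Y := by
  have e2 : Z*Y - Y*Z = -(Complex.I • X) := by rw [← h12]; abel
  have e3 : X*Z - Z*X = -(Complex.I • Y) := by rw [← h20]; abel
  have hlinX := spin_lin X Y Z c h01 h12 h20 hcas
  have key : X*(X*Z) - Z*(X*X) = -(Complex.I • (X*Y + Y*X)) := by
    calc X*(X*Z) - Z*(X*X)
        = X*(X*Z - Z*X) + (X*Z - Z*X)*X := by noncomm_ring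
      _ = X*(-(Complex.I • Y)) + (-(Complex.I • Y))*X := by rw [e3]
      _ = -(Complex.I • (X*Y + Y*X)) := by noncomm_ring <;> module
  calc X*(Y*X)*X + Y*(Y*X)*Y + Z*(Y*X)*Z
      = Y*(X*X*X + Y*X*Y + Z*X*Z) + (X*Y - Y*X)*(X*X) + (Z*Y - Y*Z)*(X*Z) := by
        noncomm_ring
    _ = Y*((c-1) • X) + (Complex.I • Z)*(X*X) + (-(Complex.I • X))*(X*Z) := by
        rw [hlinX, h01, e2]
    _ = (c-1) • (Y*X) - Complex.I • (X*(X*Z) - Z*(X*X)) := by noncomm_ring <;> module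
    _ = (c-1) • (Y*X) - Complex.I • (-(Complex.I • (X*Y + Y*X))) := by rw [key]
    _ = (c-1) • (Y*X) + (Complex.I * Complex.I) • (X*Y + Y*X) := by
        rw [smul_neg, smul_smul]; abel
    _ = (c - 2) • (Y*X) - X*Y := by
        rw [Complex.I_mul_I, neg_one_smul, sub_smul, sub_smul, one_smul,
          show ((2:ℂ)) • (Y*X) = (Y*X) + (Y*X) by
            rw [show (2:ℂ) = 1+1 by norm_num, add_smul, one_smul]]
        abel

lemma spin_quad_sym_off (X Y Z : R) (c : ℂ)
    (h01 : X*Y - Y*X = Complex.I • Z)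
    (h12 : Y*Z - Z*Y = Complex.I • X)
    (h20 : Z*X - X*Z = Complex.I • Y)
    (hcas : X*X + Y*Y + Z*Z = c • 1) :
    X*(X*Y + Y*X)*X + Y*(X*Y + Y*X)*Y + Z*(X*Y + Y*X)*Z
      = (c - 3) • (X*Y + Y*X) := by
  have hab := spin_quad_ab X Y Z c h01 h12 h20 hcas
  have hba := spin_quad_ba X Y Z c h01 h12 h20 hcas
  calc X*(X*Y + Y*X)*X + Y*(X*Y + Y*X)*Y + Z*(X*Y + Y*X)*Z
      = (X*(X*Y)*X + Y*(X*Y)*Y + Z*(X*Y)*Z)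
        + (X*(Y*X)*X + Y*(Y*X)*Y + Z*(Y*X)*Z) := by noncomm_ring
    _ = ((c - 2) • (X*Y) - Y*X) + ((c - 2) • (Y*X) - X*Y) := by rw [hab, hba]
    _ = (c - 3) • (X*Y + Y*X) := by module

lemma spin_quad_sym_diag (X Y Z : R) (c : ℂ)
    (h01 : X*Y - Y*X = Complex.I • Z)
    (h12 : Y*Z - Z*Y = Complex.I • X)
    (h20 : Z*X - X*Z = Complex.I • Y)
    (hcas : X*X + Y*Y + Z*Z = c • 1) :
    X*(X*X + X*X)*X + Y*(X*X + X*X)*Y + Z*(X*X + X*X)*Z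
      = (c - 3) • (X*X + X*X) + (2*c) • 1 := by
  have haa := spin_quad_aa X Y Z c h01 h12 h20 hcas
  calc X*(X*X + X*X)*X + Y*(X*X + X*X)*Y + Z*(X*X + X*X)*Z
      = (X*(X*X)*X + Y*(X*X)*Y + Z*(X*X)*Z)
        + (X*(X*X)*X + Y*(X*X)*Y + Z*(X*X)*Z) := by noncomm_ring
    _ = ((c - 3) • (X*X) + c • 1) + ((c - 3) • (X*X) + c • 1) := by rw [haa]
    _ = (c - 3) • (X*X + X*X) + (2*c) • 1 := by module

end SpinAux

/-- **Higher spin channel.** Let `J₁, J₂, J₃` be Hermitian `d×d`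
matrices, `d = 2s+1`, `2s` a positive integer, satisfying the `su(2)` commutation
relations and `∑ᵢ Jᵢ² = λ·I` with `λ = s(s+1)`. For
`ρ_{v,w} = ∑_a v_a J_a + ∑_{a,b} w_{ab} J_{(a}J_{b)}`:
(1) `Tr ρ_{v,w} = 1 ↔ Tr w = 3/(dλ)`; and
(2) the spin-`s` channel `Ε_s(ρ) = (1−p)ρ + (p/λ)∑ᵢ Jᵢ ρ Jᵢ` satisfies
`Ε_s(ρ_{v,w}) = (1 − p/λ) ∑ v_a J_a + (1 − 3p/λ) ∑ w_{ab} J_{(a}J_{b)} + p (Tr w) I`. -/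
theorem spin_s_channel_action (s : ℝ) (hs : ∃ m : ℕ, 0 < m ∧ 2 * s = (m : ℝ))
    (d : ℕ) (hd : (d : ℝ) = 2 * s + 1)
    (J : Fin 3 → Matrix (Fin d) (Fin d) ℂ)
    (hherm : ∀ a, (J a).IsHermitian)
    (hcomm : ∀ a b, J a * J b - J b * J a
      = Complex.I • ∑ c, ((leviCivita a b c : ℤ) : ℂ) • J c)
    (hcas : ∑ i, J i * J i = ((s * (s + 1) : ℝ) : ℂ) • (1 : Matrix (Fin d) (Fin d) ℂ))
    (v : Fin 3 → ℝ) (w : Matrix (Fin 3) (Fin 3) ℝ) (hw : w.IsSymm) (p : ℝ) :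
    ((∑ a, (v a : ℂ) • J a +
        ∑ a, ∑ b, (w a b : ℂ) • ((1 / 2 : ℂ) • (J a * J b + J b * J a))).trace = 1
      ↔ w.trace = 3 / ((d : ℝ) * (s * (s + 1)))) ∧
    ((1 - (p : ℂ)) •
        (∑ a, (v a : ℂ) • J a +
          ∑ a, ∑ b, (w a b : ℂ) • ((1 / 2 : ℂ) • (J a * J b + J b * J a))) +
      ((p / (s * (s + 1)) : ℝ) : ℂ) •
        ∑ i, J i *
          (∑ a, (v a : ℂ) • J a +
            ∑ a, ∑ b, (w a b : ℂ) • ((1 / 2 : ℂ) • (J a * J b + J b * J a))) * J i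
      = ((1 - p / (s * (s + 1)) : ℝ) : ℂ) • (∑ a, (v a : ℂ) • J a) +
        ((1 - 3 * p / (s * (s + 1)) : ℝ) : ℂ) •
          (∑ a, ∑ b, (w a b : ℂ) • ((1 / 2 : ℂ) • (J a * J b + J b * J a))) +
        ((p * w.trace : ℝ) : ℂ) • (1 : Matrix (Fin d) (Fin d) ℂ)) := by
  clear hherm
  -- basic positivity
  obtain ⟨m, hm0, hm⟩ := hs
  have hs1 : (1 : ℝ) ≤ 2 * s := by rw [hm]; exact_mod_cast hm0
  have hlam : (0 : ℝ) < s * (s + 1) := by nlinarith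
  have hlam0 : (s * (s + 1) : ℝ) ≠ 0 := ne_of_gt hlam
  have hdpos : (0 : ℝ) < (d : ℝ) := by rw [hd]; linarith
  set c : ℂ := ((s * (s + 1) : ℝ) : ℂ) with hc
  have hc0 : c ≠ 0 := by
    simpa [hc] using Complex.ofReal_ne_zero.mpr hlam0
  -- commutation relations
  have h01 : J 0 * J 1 - J 1 * J 0 = Complex.I • J 2 := by
    simpa [Fin.sum_univ_three, leviCivita] using hcomm 0 1
  have h12 : J 1 * J 2 - J 2 * J 1 = Complex.I • J 0 := by
    simpa [Fin.sum_univ_three, leviCivita] using hcomm 1 2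
  have h20 : J 2 * J 0 - J 0 * J 2 = Complex.I • J 1 := by
    simpa [Fin.sum_univ_three, leviCivita] using hcomm 2 0
  have hcas' : J 0 * J 0 + J 1 * J 1 + J 2 * J 2 = c • 1 := by
    simpa [Fin.sum_univ_three] using hcas
  have hcasY : J 1 * J 1 + J 2 * J 2 + J 0 * J 0 = c • 1 := by rw [← hcas']; abel
  have hcasZ : J 2 * J 2 + J 0 * J 0 + J 1 * J 1 = c • 1 := by rw [← hcas']; abel
  have h3 : ∀ a : Fin 3, a = 0 ∨ a = 1 ∨ a = 2 := by decide
  -- linear identity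
  have hlin : ∀ a, (∑ i, J i * J a * J i) = (c - 1) • J a := by
    intro a
    rw [Fin.sum_univ_three]
    rcases h3 a with rfl | rfl | rfl
    · exact spin_lin (J 0) (J 1) (J 2) c h01 h12 h20 hcas'
    · rw [← spin_lin (J 1) (J 2) (J 0) c h12 h20 h01 hcasY]; abel
    · rw [← spin_lin (J 2) (J 0) (J 1) c h20 h01 h12 hcasZ]; abel
  -- quadratic identity
  have hquad : ∀ a b, (∑ i, J i * (J a * J b + J b * J a) * J i)
      = (c - 3) • (J a * J b + J b * J a) + (if a = b then 2 * c else 0) • 1 := by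
    have Qd0 := spin_quad_sym_diag (J 0) (J 1) (J 2) c h01 h12 h20 hcas'
    have Qd1 := spin_quad_sym_diag (J 1) (J 2) (J 0) c h12 h20 h01 hcasY
    have Qd2 := spin_quad_sym_diag (J 2) (J 0) (J 1) c h20 h01 h12 hcasZ
    have Qo01 := spin_quad_sym_off (J 0) (J 1) (J 2) c h01 h12 h20 hcas'
    have Qo12 := spin_quad_sym_off (J 1) (J 2) (J 0) c h12 h20 h01 hcasY
    have Qo20 := spin_quad_sym_off (J 2) (J 0) (J 1) c h20 h01 h12 hcasZ
    intro a b
    rw [Fin.sum_univ_three]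
    rcases h3 a with rfl | rfl | rfl <;> rcases h3 b with rfl | rfl | rfl
    · rw [if_pos rfl]; exact Qd0
    · rw [if_neg (by decide), zero_smul, add_zero]; exact Qo01
    · rw [if_neg (by decide), zero_smul, add_zero, add_comm (J 0 * J 2) (J 2 * J 0), ← Qo20]
      abel
    · rw [if_neg (by decide), zero_smul, add_zero, add_comm (J 1 * J 0) (J 0 * J 1)]
      exact Qo01
    · rw [if_pos rfl, ← Qd1]; abel
    · rw [if_neg (by decide), zero_smul, add_zero, ← Qo12]; abel
    · rw [if_neg (by decide), zero_smul, add_zero, ← Qo20]; abel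
    · rw [if_neg (by decide), zero_smul, add_zero, add_comm (J 2 * J 1) (J 1 * J 2), ← Qo12]
      abel
    · rw [if_pos rfl, ← Qd2]; abel
  -- channel action on the linear part
  have E1 : (∑ i, J i * (∑ a, (v a : ℂ) • J a) * J i) = (c - 1) • ∑ a, (v a : ℂ) • J a := by
    calc ∑ i, J i * (∑ a, (v a : ℂ) • J a) * J i
        = ∑ i, ∑ a, (v a : ℂ) • (J i * J a * J i) := by
          refine Finset.sum_congr rfl fun i _ => ?_
          rw [Finset.mul_sum, Finset.sum_mul]
          exact Finset.sum_congr rfl fun a _ => by rw [mul_smul_comm, smul_mul_assoc]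
      _ = ∑ a, (v a : ℂ) • ∑ i, (J i * J a * J i) := by
          rw [Finset.sum_comm]
          exact Finset.sum_congr rfl fun a _ => (Finset.smul_sum).symm
      _ = ∑ a, (v a : ℂ) • ((c - 1) • J a) :=
          Finset.sum_congr rfl fun a _ => by rw [hlin a]
      _ = (c - 1) • ∑ a, (v a : ℂ) • J a := by
          rw [Finset.smul_sum]
          exact Finset.sum_congr rfl fun a _ => smul_comm _ _ _
  have htrw : ((w.trace : ℝ) : ℂ) = ∑ a, (w a a : ℂ) := by
    rw [Matrix.trace]; push_cast; rfl
  -- channel action on the quadratic part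
  have E2 : (∑ i, J i * (∑ a, ∑ b, (w a b : ℂ) • ((1/2 : ℂ) • (J a * J b + J b * J a))) * J i)
      = (c - 3) • (∑ a, ∑ b, (w a b : ℂ) • ((1/2 : ℂ) • (J a * J b + J b * J a)))
        + (c * ((w.trace : ℝ) : ℂ)) • 1 := by
    calc ∑ i, J i * (∑ a, ∑ b, (w a b : ℂ) • ((1/2 : ℂ) • (J a * J b + J b * J a))) * J i
        = ∑ i, ∑ a, ∑ b, (w a b : ℂ) •
            ((1/2 : ℂ) • (J i * (J a * J b + J b * J a) * J i)) := by
          refine Finset.sum_congr rfl fun i _ => ?_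
          rw [Finset.mul_sum, Finset.sum_mul]
          refine Finset.sum_congr rfl fun a _ => ?_
          rw [Finset.mul_sum, Finset.sum_mul]
          refine Finset.sum_congr rfl fun b _ => ?_
          rw [mul_smul_comm, smul_mul_assoc, mul_smul_comm, smul_mul_assoc]
      _ = ∑ a, ∑ b, (w a b : ℂ) •
            ((1/2 : ℂ) • (∑ i, J i * (J a * J b + J b * J a) * J i)) := by
          rw [Finset.sum_comm]
          refine Finset.sum_congr rfl fun a _ => ?_
          rw [Finset.sum_comm]
          refine Finset.sum_congr rfl fun b _ => ?_
          rw [Finset.smul_sum, Finset.smul_sum]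
      _ = ∑ a, ∑ b, (w a b : ℂ) •
            ((1/2 : ℂ) • ((c - 3) • (J a * J b + J b * J a)
              + (if a = b then 2 * c else 0) • 1)) :=
          Finset.sum_congr rfl fun a _ => Finset.sum_congr rfl fun b _ => by rw [hquad]
      _ = (∑ a, ∑ b, (c - 3) • ((w a b : ℂ) • ((1/2 : ℂ) • (J a * J b + J b * J a))))
            + ∑ a, ∑ b, (if a = b then ((w a b : ℂ) * c) • (1 : Matrix (Fin d) (Fin d) ℂ)
                else 0) := by
          rw [← Finset.sum_add_distrib]
          refine Finset.sum_congr rfl fun a _ => ?_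
          rw [← Finset.sum_add_distrib]
          refine Finset.sum_congr rfl fun b _ => ?_
          split_ifs with h
          · match_scalars <;> ring
          · match_scalars <;> ring
      _ = (c - 3) • (∑ a, ∑ b, (w a b : ℂ) • ((1/2 : ℂ) • (J a * J b + J b * J a)))
            + (c * ((w.trace : ℝ) : ℂ)) • 1 := by
          congr 1
          · rw [Finset.smul_sum]
            exact Finset.sum_congr rfl fun a _ => (Finset.smul_sum).symm
          · calc (∑ a, ∑ b, (if a = b then ((w a b : ℂ) * c) • (1 : Matrix (Fin d) (Fin d) ℂ)
                else 0))
                = ∑ a : Fin 3, ((w a a : ℂ) * c) • (1 : Matrix (Fin d) (Fin d) ℂ) := by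
                  refine Finset.sum_congr rfl fun a _ => ?_
                  rw [Finset.sum_ite_eq, if_pos (Finset.mem_univ a)]
              _ = (c * ((w.trace : ℝ) : ℂ)) • 1 := by
                  rw [htrw, Finset.mul_sum, Finset.sum_smul]
                  exact Finset.sum_congr rfl fun a _ => by rw [mul_comm]
  -- trace facts
  have keyod1 : ∀ A B C : Matrix (Fin d) (Fin d) ℂ,
      B * C - C * B = Complex.I • A → (B * A).trace = 0 := by
    intro A B C h
    have h2 := congrArg (fun X => (B * X).trace) h
    simp only [mul_sub, Matrix.trace_sub, mul_smul_comm, Matrix.trace_smul,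
      smul_eq_mul] at h2
    rw [show B * (C * B) = (B * C) * B by rw [mul_assoc],
      Matrix.trace_mul_comm (B * C) B, sub_self] at h2
    rcases mul_eq_zero.mp h2.symm with h3 | h3
    · exact absurd h3 Complex.I_ne_zero
    · exact h3
  have keyod2 : ∀ A B C : Matrix (Fin d) (Fin d) ℂ,
      B * C - C * B = Complex.I • A → (C * A).trace = 0 := by
    intro A B C h
    have h2 := congrArg (fun X => (C * X).trace) h
    simp only [mul_sub, Matrix.trace_sub, mul_smul_comm, Matrix.trace_smul,
      smul_eq_mul] at h2
    rw [show C * (B * C) = (C * B) * C by rw [mul_assoc],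
      Matrix.trace_mul_comm (C * B) C, sub_self] at h2
    rcases mul_eq_zero.mp h2.symm with h3 | h3
    · exact absurd h3 Complex.I_ne_zero
    · exact h3
  have keydd : ∀ A B C : Matrix (Fin d) (Fin d) ℂ,
      B * C - C * B = Complex.I • A →
      Complex.I * (A * A).trace = (A * (B * C)).trace - (A * (C * B)).trace := by
    intro A B C h
    have h2 := congrArg (fun X => (A * X).trace) h
    simp only [mul_sub, Matrix.trace_sub, mul_smul_comm, Matrix.trace_smul,
      smul_eq_mul] at h2
    exact h2.symm
  have dd0 := keydd (J 0) (J 1) (J 2) h12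
  have dd1 := keydd (J 1) (J 2) (J 0) h20
  have dd2 := keydd (J 2) (J 0) (J 1) h01
  have r10 : (J 1 * (J 2 * J 0)).trace = (J 0 * (J 1 * J 2)).trace := by
    rw [show J 1 * (J 2 * J 0) = (J 1 * J 2) * J 0 by rw [mul_assoc],
      Matrix.trace_mul_comm]
  have r11 : (J 1 * (J 0 * J 2)).trace = (J 0 * (J 2 * J 1)).trace := by
    rw [show J 0 * (J 2 * J 1) = (J 0 * J 2) * J 1 by rw [mul_assoc],
      Matrix.trace_mul_comm]
  have r20 : (J 2 * (J 0 * J 1)).trace = (J 0 * (J 1 * J 2)).trace := by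
    rw [show J 2 * (J 0 * J 1) = (J 2 * J 0) * J 1 by rw [mul_assoc],
      Matrix.trace_mul_comm]
    exact r10
  have r21 : (J 2 * (J 1 * J 0)).trace = (J 0 * (J 2 * J 1)).trace := by
    rw [show J 2 * (J 1 * J 0) = (J 2 * J 1) * J 0 by rw [mul_assoc],
      Matrix.trace_mul_comm]
  rw [r10, r11] at dd1
  rw [r20, r21] at dd2
  have eq01 : (J 0 * J 0).trace = (J 1 * J 1).trace :=
    mul_left_cancel₀ Complex.I_ne_zero (dd0.trans dd1.symm)
  have eq02 : (J 0 * J 0).trace = (J 2 * J 2).trace :=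
    mul_left_cancel₀ Complex.I_ne_zero (dd0.trans dd2.symm)
  have hsumtr : (J 0 * J 0).trace + (J 1 * J 1).trace + (J 2 * J 2).trace = c * d := by
    have h2 := congrArg Matrix.trace hcas'
    simpa [Matrix.trace_add, Matrix.trace_smul, Matrix.trace_one] using h2
  have tr00 : (J 0 * J 0).trace = c * d / 3 := by
    rw [← eq01, ← eq02] at hsumtr; linear_combination hsumtr / 3
  have htrJJ : ∀ a b, (J a * J b).trace = if a = b then c * d / 3 else 0 := by
    intro a b
    rcases h3 a with rfl | rfl | rfl <;> rcases h3 b with rfl | rfl | rfl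
    · rw [if_pos rfl]; exact tr00
    · rw [if_neg (by decide)]; exact keyod2 (J 1) (J 2) (J 0) h20
    · rw [if_neg (by decide)]; exact keyod1 (J 2) (J 0) (J 1) h01
    · rw [if_neg (by decide)]; exact keyod1 (J 0) (J 1) (J 2) h12
    · rw [if_pos rfl, ← eq01]; exact tr00
    · rw [if_neg (by decide)]; exact keyod2 (J 2) (J 0) (J 1) h01
    · rw [if_neg (by decide)]; exact keyod2 (J 0) (J 1) (J 2) h12
    · rw [if_neg (by decide)]; exact keyod1 (J 1) (J 2) (J 0) h20
    · rw [if_pos rfl, ← eq02]; exact tr00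
  have htr0 : ∀ a, (J a).trace = 0 := by
    intro a
    rcases h3 a with rfl | rfl | rfl
    · have h2 := congrArg Matrix.trace h12
      rw [Matrix.trace_sub, Matrix.trace_mul_comm, sub_self, Matrix.trace_smul,
        smul_eq_mul] at h2
      rcases mul_eq_zero.mp h2.symm with h4 | h4
      · exact absurd h4 Complex.I_ne_zero
      · exact h4
    · have h2 := congrArg Matrix.trace h20
      rw [Matrix.trace_sub, Matrix.trace_mul_comm, sub_self, Matrix.trace_smul,
        smul_eq_mul] at h2
      rcases mul_eq_zero.mp h2.symm with h4 | h4
      · exact absurd h4 Complex.I_ne_zero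
      · exact h4
    · have h2 := congrArg Matrix.trace h01
      rw [Matrix.trace_sub, Matrix.trace_mul_comm, sub_self, Matrix.trace_smul,
        smul_eq_mul] at h2
      rcases mul_eq_zero.mp h2.symm with h4 | h4
      · exact absurd h4 Complex.I_ne_zero
      · exact h4
  -- trace of ρ
  have tterm : ∀ a b : Fin 3, ((w a b : ℂ) • ((1 / 2 : ℂ) • (J a * J b + J b * J a))).trace
      = if a = b then (w a b : ℂ) * (c * d / 3) else 0 := by
    intro a b
    by_cases h : a = b
    · subst h
      rw [if_pos rfl, Matrix.trace_smul, Matrix.trace_smul, Matrix.trace_add, htrJJ,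
        if_pos rfl, smul_eq_mul, smul_eq_mul]
      ring
    · rw [if_neg h, Matrix.trace_smul, Matrix.trace_smul, Matrix.trace_add, htrJJ, htrJJ,
        if_neg h, if_neg (fun hh => h hh.symm)]
      simp
  have Tρ : (∑ a, (v a : ℂ) • J a +
      ∑ a, ∑ b, (w a b : ℂ) • ((1 / 2 : ℂ) • (J a * J b + J b * J a))).trace
      = ((w.trace : ℝ) : ℂ) * (c * d / 3) := by
    rw [Matrix.trace_add]
    rw [show (∑ a, (v a : ℂ) • J a).trace = 0 by
      rw [Matrix.trace_sum]
      refine Finset.sum_eq_zero fun a _ => ?_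
      rw [Matrix.trace_smul, htr0, smul_zero]]
    rw [zero_add, Matrix.trace_sum]
    calc (∑ a, (∑ b, (w a b : ℂ) • ((1 / 2 : ℂ) • (J a * J b + J b * J a))).trace)
        = ∑ a, ∑ b, (if a = b then (w a b : ℂ) * (c * d / 3) else 0) := by
          refine Finset.sum_congr rfl fun a _ => ?_
          rw [Matrix.trace_sum]
          exact Finset.sum_congr rfl fun b _ => tterm a b
      _ = ∑ a : Fin 3, (w a a : ℂ) * (c * d / 3) := by
          refine Finset.sum_congr rfl fun a _ => ?_
          rw [Finset.sum_ite_eq, if_pos (Finset.mem_univ a)]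
      _ = ((w.trace : ℝ) : ℂ) * (c * d / 3) := by
          rw [htrw, Finset.sum_mul]
  constructor
  · -- part 1: trace condition
    rw [Tρ, show ((w.trace : ℝ) : ℂ) * (c * d / 3)
        = ((w.trace * (s * (s + 1) * d / 3) : ℝ) : ℂ) by rw [hc]; push_cast; ring,
      show (1 : ℂ) = ((1 : ℝ) : ℂ) by norm_num, Complex.ofReal_inj]
    rw [eq_div_iff (by positivity : ((d : ℝ) * (s * (s + 1))) ≠ 0)]
    constructor
    · intro h; linear_combination 3 * h
    · intro h; linear_combination h / 3
  · -- part 2: channel action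
    have Echan : (∑ i, J i * (∑ a, (v a : ℂ) • J a +
        ∑ a, ∑ b, (w a b : ℂ) • ((1 / 2 : ℂ) • (J a * J b + J b * J a))) * J i)
        = (c - 1) • (∑ a, (v a : ℂ) • J a)
          + ((c - 3) • (∑ a, ∑ b, (w a b : ℂ) • ((1 / 2 : ℂ) • (J a * J b + J b * J a)))
            + (c * ((w.trace : ℝ) : ℂ)) • 1) := by
      calc (∑ i, J i * (∑ a, (v a : ℂ) • J a +
          ∑ a, ∑ b, (w a b : ℂ) • ((1 / 2 : ℂ) • (J a * J b + J b * J a))) * J i)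
          = ∑ i, (J i * (∑ a, (v a : ℂ) • J a) * J i
            + J i * (∑ a, ∑ b, (w a b : ℂ) •
                ((1 / 2 : ℂ) • (J a * J b + J b * J a))) * J i) :=
            Finset.sum_congr rfl fun i _ => by rw [mul_add, add_mul]
        _ = (∑ i, J i * (∑ a, (v a : ℂ) • J a) * J i)
            + ∑ i, J i * (∑ a, ∑ b, (w a b : ℂ) •
                ((1 / 2 : ℂ) • (J a * J b + J b * J a))) * J i :=
            Finset.sum_add_distrib
        _ = _ := by rw [E1, E2]
    rw [Echan]
    have hlamC : ((s : ℂ) * ((s : ℂ) + 1)) ≠ 0 := by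
      have : (((s * (s + 1)) : ℝ) : ℂ) ≠ 0 := Complex.ofReal_ne_zero.mpr hlam0
      push_cast at this
      convert this using 2 <;> push_cast <;> ring
    match_scalars
    · rw [hc]; push_cast; field_simp [left_ne_zero_of_mul hlamC, right_ne_zero_of_mul hlamC]; ring
    · rw [hc]; push_cast; field_simp [left_ne_zero_of_mul hlamC, right_ne_zero_of_mul hlamC]; ring
    · rw [hc]; push_cast; field_simp [left_ne_zero_of_mul hlamC, right_ne_zero_of_mul hlamC]
end

section
/- Let T be a traceless Hermitian 3×3 complex matrix. Then (1/3)(I + T) is positive semidefinite if and only if Tr(T²) ≤ 6 and Tr(T²) ≤ 2 + 2·det(T). Equivalently, writing T = ∑_{i=1}^8 v_i λ_i in a Gell-Mann basis λ_1, …, λ_8 of traceless Hermitian 3×3 matrices with Tr(λ_i λ_j) = 2δ_{ij} (so that ∑ v_i² = Tr(T²)/2 and det(T) = det(v·λ)), the Bloch manifold of the defining representation of su(3) is { v ∈ ℝ^8 : ∑ v_i² ≤ min(3, 1 + det(v·λ)) }. -/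
open Matrix BigOperators
open scoped ComplexOrder

lemma scalar3 (a b c : ℝ) (h : a + b + c = 0) :
    ((-1 ≤ a ∧ -1 ≤ b ∧ -1 ≤ c) ↔
      (a^2+b^2+c^2 ≤ 6 ∧ a^2+b^2+c^2 ≤ 2 + 2*(a*b*c))) := by
  constructor
  · rintro ⟨ha, hb, hc⟩
    constructor
    · nlinarith [mul_nonneg (by linarith : (0:ℝ) ≤ 1+a) (by linarith : (0:ℝ) ≤ 1+b),
        mul_nonneg (by linarith : (0:ℝ) ≤ 1+a) (by linarith : (0:ℝ) ≤ 1+c),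
        mul_nonneg (by linarith : (0:ℝ) ≤ 1+b) (by linarith : (0:ℝ) ≤ 1+c)]
    · nlinarith [mul_nonneg (mul_nonneg (by linarith : (0:ℝ) ≤ 1+a) (by linarith : (0:ℝ) ≤ 1+b)) (by linarith : (0:ℝ) ≤ 1+c)]
  · rintro ⟨h1, h2⟩
    have key : ∀ x y z : ℝ, x + y + z = 0 → x^2+y^2+z^2 ≤ 6 → x^2+y^2+z^2 ≤ 2 + 2*(x*y*z) → -1 ≤ x := by
      intro x y z hs hA hB
      by_contra hx
      push_neg at hx
      have hp : 0 ≤ (1+x)*((1+y)*(1+z)) := by nlinarith [sq_nonneg (x+y+z)]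
      have hyz : (1+y)*(1+z) ≤ 0 := by nlinarith [mul_pos (by linarith : (0:ℝ) < -(1+x)) (by linarith : (0:ℝ) < -(1+x))]
      nlinarith [mul_pos (by linarith : (0:ℝ) < -(1+x)) (by linarith : (0:ℝ) < 2 - x), sq_nonneg (x+y+z)]
    exact ⟨key a b c h h1 h2, key b a c (by linarith) (by linarith) (by nlinarith),
      key c a b (by linarith) (by linarith) (by nlinarith)⟩


lemma part1 (T : Matrix (Fin 3) (Fin 3) ℂ) (hT : T.IsHermitian) (htr : T.trace = 0) :
    (((1 / 3 : ℂ) • ((1 : Matrix (Fin 3) (Fin 3) ℂ) + T)).PosSemidef ↔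
      ((T * T).trace.re ≤ 6 ∧ (T * T).trace.re ≤ 2 + 2 * T.det.re)) := by
  set a : Fin 3 → ℝ := hT.eigenvalues with ha
  set U : Matrix (Fin 3) (Fin 3) ℂ := (hT.eigenvectorUnitary : Matrix (Fin 3) (Fin 3) ℂ) with hU
  have hUU : star U * U = 1 := (Matrix.mem_unitaryGroup_iff').mp hT.eigenvectorUnitary.2
  have hUU' : U * star U = 1 := (Matrix.mem_unitaryGroup_iff).mp hT.eigenvectorUnitary.2
  set D : Matrix (Fin 3) (Fin 3) ℂ := diagonal (fun i => (a i : ℂ)) with hD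
  have hspec : T = U * D * star U := by
    have := hT.spectral_theorem
    rw [Unitary.conjStarAlgAut_apply] at this
    exact this
  -- sum of eigenvalues is 0
  have htrD : T.trace = ∑ i, (a i : ℂ) := by
    rw [hspec, Matrix.trace_mul_cycle, hUU, one_mul, hD, Matrix.trace_diagonal]
  have hsum : a 0 + a 1 + a 2 = 0 := by
    have : ((a 0 + a 1 + a 2 : ℝ) : ℂ) = 0 := by
      push_cast
      rw [← Fin.sum_univ_three (fun i => (a i : ℂ)), ← htrD, htr]
    exact_mod_cast this
  -- trace of T²
  have hT2 : (T * T).trace.re = a 0 ^ 2 + a 1 ^ 2 + a 2 ^ 2 := by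
    have hTT : T * T = U * (D * D) * star U := by
      rw [hspec]
      calc U * D * star U * (U * D * star U) = U * D * (star U * U) * D * star U := by
            noncomm_ring
        _ = U * (D * D) * star U := by rw [hUU]; noncomm_ring
    rw [hTT, Matrix.trace_mul_cycle, hUU, one_mul, hD, diagonal_mul_diagonal,
      Matrix.trace_diagonal]
    have : (∑ i, (a i : ℂ) * (a i : ℂ)) = ((a 0 ^ 2 + a 1 ^ 2 + a 2 ^ 2 : ℝ) : ℂ) := by
      rw [Fin.sum_univ_three]; push_cast; ring
    rw [this, Complex.ofReal_re]
  -- determinant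
  have hdet : T.det.re = a 0 * a 1 * a 2 := by
    rw [hT.det_eq_prod_eigenvalues, Fin.prod_univ_three, ← ha]
    norm_cast
  -- PosSemidef iff eigenvalues ≥ -1
  set dg : Matrix (Fin 3) (Fin 3) ℂ := diagonal (fun i => (((1 + a i) / 3 : ℝ) : ℂ)) with hdg
  have hpsd : ((1 / 3 : ℂ) • ((1 : Matrix (Fin 3) (Fin 3) ℂ) + T)).PosSemidef ↔
      ∀ i, -1 ≤ a i := by
    have hM : (1 / 3 : ℂ) • ((1 : Matrix (Fin 3) (Fin 3) ℂ) + T) = U * dg * star U := by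
      have h1 : (1 : Matrix (Fin 3) (Fin 3) ℂ) + T = U * (1 + D) * star U := by
        rw [hspec, mul_add, add_mul, mul_one, hUU']
      rw [h1, ← Matrix.smul_mul, ← Matrix.mul_smul]
      congr 1
      congr 1
      rw [hD, hdg, ← Matrix.diagonal_one, Matrix.diagonal_add, ← Matrix.diagonal_smul]
      refine congrArg Matrix.diagonal ?_
      funext i
      show (1/3 : ℂ) * (1 + (a i : ℂ)) = (((1 + a i)/3 : ℝ) : ℂ)
      push_cast
      ring
    rw [hM]
    constructor
    · intro h
      have h2 := h.mul_mul_conjTranspose_same (star U)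
      have e : star U * (U * dg * star U) * (star U)ᴴ = dg := by
        rw [Matrix.star_eq_conjTranspose, Matrix.conjTranspose_conjTranspose,
          ← Matrix.star_eq_conjTranspose]
        calc star U * (U * dg * star U) * U = (star U * U) * dg * (star U * U) := by
              noncomm_ring
          _ = dg := by rw [hUU, one_mul, mul_one]
      rw [e] at h2
      intro i
      have h3 := (Matrix.posSemidef_diagonal_iff.mp h2) i
      rw [Complex.zero_le_real] at h3
      linarith
    · intro h
      have hdpsd : dg.PosSemidef := by
        refine Matrix.posSemidef_diagonal_iff.mpr fun i => ?_
        rw [Complex.zero_le_real]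
        have := h i
        linarith
      have h2 := hdpsd.mul_mul_conjTranspose_same U
      rwa [Matrix.star_eq_conjTranspose]
  rw [hpsd, hT2, hdet]
  have hfin : (∀ i, -1 ≤ a i) ↔ (-1 ≤ a 0 ∧ -1 ≤ a 1 ∧ -1 ≤ a 2) := by
    constructor
    · intro h; exact ⟨h 0, h 1, h 2⟩
    · rintro ⟨h0, h1, h2⟩ i; fin_cases i <;> assumption
  rw [hfin, scalar3 (a 0) (a 1) (a 2) hsum]

/-- **Bloch manifold of the defining representation of su(3).**
For a traceless Hermitian `3×3` matrix `T`, the matrix `(1/3)(I + T)` is positive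
semidefinite iff `Tr(T²) ≤ 6` and `Tr(T²) ≤ 2 + 2 det T`.  Equivalently, for a
Gell-Mann basis `λ₁, …, λ₈` of the traceless Hermitian `3×3` matrices with
`Tr(λᵢ λⱼ) = 2δᵢⱼ`, the Bloch manifold of the defining representation of `su(3)`
is `{ v ∈ ℝ⁸ : ∑ vᵢ² ≤ min(3, 1 + det(v·λ)) }`. -/
theorem su3_bloch_manifold :
    (∀ T : Matrix (Fin 3) (Fin 3) ℂ, T.IsHermitian → T.trace = 0 →
      (((1 / 3 : ℂ) • ((1 : Matrix (Fin 3) (Fin 3) ℂ) + T)).PosSemidef ↔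
        ((T * T).trace.re ≤ 6 ∧ (T * T).trace.re ≤ 2 + 2 * T.det.re))) ∧
    (∀ lam : Fin 8 → Matrix (Fin 3) (Fin 3) ℂ,
      (∀ i, (lam i).IsHermitian) →
      (∀ i, (lam i).trace = 0) →
      (∀ i j, (lam i * lam j).trace = if i = j then 2 else 0) →
      (∀ A : Matrix (Fin 3) (Fin 3) ℂ, A.IsHermitian → A.trace = 0 →
        A ∈ Submodule.span ℝ (Set.range lam)) →
      {v : Fin 8 → ℝ |
          ((1 / 3 : ℂ) •
            ((1 : Matrix (Fin 3) (Fin 3) ℂ) + ∑ i, (v i : ℂ) • lam i)).PosSemidef}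
        = {v : Fin 8 → ℝ |
            ∑ i, v i ^ 2 ≤ min 3 (1 + (Matrix.det (∑ i, (v i : ℂ) • lam i)).re)}) := by
  refine ⟨part1, ?_⟩
  intro lam hHerm htr0 htr2 _hspan
  ext v
  set T : Matrix (Fin 3) (Fin 3) ℂ := ∑ i, (v i : ℂ) • lam i with hTdef
  have hTH : T.IsHermitian := by
    rw [hTdef]
    unfold Matrix.IsHermitian
    rw [Matrix.conjTranspose_sum]
    refine Finset.sum_congr rfl fun i _ => ?_
    rw [Matrix.conjTranspose_smul, (hHerm i).eq, Complex.star_def, Complex.conj_ofReal]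
  have hTtr : T.trace = 0 := by
    rw [hTdef, Matrix.trace_sum]
    simp [Matrix.trace_smul, htr0]
  have hTT : (T * T).trace = ((2 * ∑ i, v i ^ 2 : ℝ) : ℂ) := by
    rw [hTdef, Finset.sum_mul_sum]
    rw [Matrix.trace_sum]
    have : ∀ i : Fin 8, (∑ j, ((v i : ℂ) • lam i) * ((v j : ℂ) • lam j)).trace
        = (v i : ℂ) * (v i : ℂ) * 2 := by
      intro i
      rw [Matrix.trace_sum]
      have h1 : ∀ j : Fin 8, (((v i : ℂ) • lam i) * ((v j : ℂ) • lam j)).trace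
          = (v i : ℂ) * (v j : ℂ) * (if i = j then 2 else 0) := by
        intro j
        rw [Matrix.smul_mul, Matrix.mul_smul, smul_smul, Matrix.trace_smul, htr2,
          smul_eq_mul]
      simp only [h1]
      rw [Finset.sum_eq_single i]
      · simp
      · intro j _ hj; simp [(Ne.symm hj : ¬ i = j)]
      · intro h; exact absurd (Finset.mem_univ i) h
    simp only [this]
    push_cast
    rw [Finset.mul_sum]
    exact Finset.sum_congr rfl fun i _ => by ring
  have hTTre : (T * T).trace.re = 2 * ∑ i, v i ^ 2 := by rw [hTT, Complex.ofReal_re]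
  simp only [Set.mem_setOf_eq, ← hTdef]
  rw [part1 T hTH hTtr, hTTre, le_min_iff]
  constructor
  · rintro ⟨h1, h2⟩; exact ⟨by linarith, by linarith⟩
  · rintro ⟨h1, h2⟩; exact ⟨by linarith, by linarith⟩
end
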